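/- arXiv:2511.16959 — 6 statements merged into one kernel-verified Lean document; each statement's English description precedes it below -/
import Mathlib

section
/- If all three indices i, j, k are odd (and 1 < i, j, k ≤ n), then ⟨r_i, r_j, r_k⟩ is a proper subgroup of Sym_n for n ≥ 3: every element of this subgroup maps odd positions to odd positions and even positions to even positions. -/
/-- The prefix reversal `r i` on positions `1..n` (0-indexed as `Fin n`):
position `x+1 ↦ i+1-(x+1)` for `x+1 ≤ i`, i.e. `x ↦ i-1-x` for `x < i`, fixing the rest. -/
def pr (n i : ℕ) : Equiv.Perm (Fin n) :=
  Function.Involutive.toPerm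
    (fun x => if h : x.val < i ∧ i ≤ n then ⟨i - 1 - x.val, by omega⟩ else x)
    (by
      intro x
      apply Fin.ext
      dsimp only
      split_ifs with h1 h2 h3 <;> simp_all <;> omega)

/-! Since `i` is odd, the reversal `x ↦ i - 1 - x` of an initial segment preserves the parity of
every position, so all of `⟨r_i, r_j, r_k⟩` lies in the subgroup of parity-preserving permutations,
which does not contain the transposition of the first two positions. -/

namespace Equiv.Perm

variable {α β : Type*}

def fiberwise (f : α → β) : Subgroup (Perm α) where
  carrier := {g | ∀ x, f (g x) = f x}
  one_mem' _ := rfl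
  mul_mem' ha hb x := (ha _).trans (hb x)
  inv_mem' {g} hg x := by simpa using (hg (g⁻¹ x)).symm

theorem fiberwise_ne_top [DecidableEq α] {f : α → β} {x y : α} (h : f x ≠ f y) :
    fiberwise f ≠ ⊤ := by
  intro htop
  have hswap : swap x y ∈ fiberwise f := htop ▸ Subgroup.mem_top _
  exact h (by simpa using (hswap x).symm)

end Equiv.Perm

open Equiv.Perm

theorem pr_mem_fiberwise_mod_two (n : ℕ) {i : ℕ} (hi : Odd i) :
    pr n i ∈ fiberwise (fun x : Fin n => x.val % 2) := by
  intro x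
  simp only [pr, Function.Involutive.toPerm, Equiv.coe_fn_mk]
  split_ifs with h
  · obtain ⟨m, rfl⟩ := hi
    dsimp only
    omega
  · rfl

theorem stmt5_general (n i j k : ℕ) (hn : 3 ≤ n)
    (hoi : Odd i) (hoj : Odd j) (hok : Odd k) :
    (∀ g ∈ Subgroup.closure ({pr n i, pr n j, pr n k} : Set (Equiv.Perm (Fin n))),
      ∀ x : Fin n, ((g x).val + 1) % 2 = (x.val + 1) % 2) ∧
    Subgroup.closure ({pr n i, pr n j, pr n k} : Set (Equiv.Perm (Fin n))) ≠ ⊤ := by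
  have hle : Subgroup.closure ({pr n i, pr n j, pr n k} : Set (Equiv.Perm (Fin n)))
      ≤ fiberwise (fun x : Fin n => x.val % 2) := by
    rw [Subgroup.closure_le]
    rintro g (rfl | rfl | rfl)
    exacts [pr_mem_fiberwise_mod_two n hoi, pr_mem_fiberwise_mod_two n hoj,
      pr_mem_fiberwise_mod_two n hok]
  refine ⟨fun g hg x => by have : (g x).val % 2 = x.val % 2 := hle hg x; omega, ?_⟩
  exact ne_top_of_le_ne_top
    (fiberwise_ne_top (x := ⟨0, by omega⟩) (y := ⟨1, by omega⟩) (by simp)) hle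

theorem stmt5 (n i j k : ℕ) (hn : 3 ≤ n)
    (hi : 1 < i) (hi' : i ≤ n) (hj : 1 < j) (hj' : j ≤ n) (hk : 1 < k) (hk' : k ≤ n)
    (hoi : Odd i) (hoj : Odd j) (hok : Odd k) :
    (∀ g ∈ Subgroup.closure ({pr n i, pr n j, pr n k} : Set (Equiv.Perm (Fin n))),
      ∀ x : Fin n, ((g x).val + 1) % 2 = (x.val + 1) % 2) ∧
    Subgroup.closure ({pr n i, pr n j, pr n k} : Set (Equiv.Perm (Fin n))) ≠ ⊤ :=
  stmt5_general n i j k hn hoi hoj hok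
end

section
/- Let H = ⟨r_n, r_{n-l}, r_k⟩ ≤ Sym_n with n ≥ 6, 2 ≤ k, l ≥ k+1, and n - l > k. If l divides n+1, then the set Δ = {t ∈ {1,...,n} : l divides t} is invariant under H, and H is a proper subgroup of Sym_n. -/
open MulAction
open scoped Pointwise

theorem Equiv.Perm.mem_stabilizer_set_of_mapsTo_of_involutive {α : Type*} {g : Equiv.Perm α}
    {s : Set α} (hg : Function.Involutive g) (hs : Set.MapsTo g s s) :
    g ∈ stabilizer (Equiv.Perm α) s :=
  mem_stabilizer_set.mpr fun x => ⟨fun hx => hg x ▸ hs hx, fun hx => hs hx⟩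

namespace PrefixReversal

variable {n i : ℕ}

theorem involutive : Function.Involutive (pr n i) :=
  Function.Involutive.toPerm_involutive _

theorem val_apply_of_lt {x : Fin n} (hx : x.val < i) (hi : i ≤ n) :
    (pr n i x).val = i - 1 - x.val :=
  congrArg Fin.val (dif_pos ⟨hx, hi⟩)

theorem apply_of_le {x : Fin n} (hx : i ≤ x.val) : pr n i x = x :=
  dif_neg fun h => Nat.not_lt.mpr hx h.1

/-- The set `Δ` of the paper, shifted to 0-indexed positions. -/
def multiples (n l : ℕ) : Set (Fin n) := {x | l ∣ x.val + 1}

variable {l : ℕ}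

theorem mapsTo_multiples_of_dvd (h : l ∣ i + 1) (hi : i ≤ n) :
    Set.MapsTo (pr n i) (multiples n l) (multiples n l) := by
  intro x (hx : l ∣ x.val + 1)
  show l ∣ (pr n i x).val + 1
  rcases Nat.lt_or_ge x.val i with hxi | hxi
  · rw [val_apply_of_lt hxi hi, show i - 1 - x.val + 1 = (i + 1) - (x.val + 1) by omega]
    exact Nat.dvd_sub h hx
  · rwa [apply_of_le hxi]

theorem mapsTo_multiples_of_lt (h : i < l) :
    Set.MapsTo (pr n i) (multiples n l) (multiples n l) := by
  intro x (hx : l ∣ x.val + 1)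
  have := Nat.le_of_dvd x.val.succ_pos hx
  rwa [multiples, Set.mem_ofPred_eq, apply_of_le (by omega)]

theorem closure_le_stabilizer_multiples {k : ℕ} (hl : l ∣ n + 1) (hln : l ≤ n) (hkl : k < l) :
    Subgroup.closure ({pr n n, pr n (n - l), pr n k} : Set (Equiv.Perm (Fin n))) ≤
      stabilizer (Equiv.Perm (Fin n)) (multiples n l) := by
  have hnl : l ∣ n - l + 1 := by
    simpa [show n - l + 1 = n + 1 - l by omega] using Nat.dvd_sub hl dvd_rfl
  rw [Subgroup.closure_le]
  rintro g (rfl | rfl | rfl) <;>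
    refine Equiv.Perm.mem_stabilizer_set_of_mapsTo_of_involutive involutive ?_
  exacts [mapsTo_multiples_of_dvd hl le_rfl, mapsTo_multiples_of_dvd hnl (Nat.sub_le n l),
    mapsTo_multiples_of_lt hkl]

end PrefixReversal

open PrefixReversal

theorem stmt7_general (n k l : ℕ) (hk : 2 ≤ k) (hlk : k + 1 ≤ l)
    (hknl : k < n - l) (hdvd : l ∣ n + 1) :
    (∀ g ∈ Subgroup.closure ({pr n n, pr n (n - l), pr n k} : Set (Equiv.Perm (Fin n))),
      ∀ x : Fin n, l ∣ (x.val + 1) → l ∣ ((g x).val + 1)) ∧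
    Subgroup.closure ({pr n n, pr n (n - l), pr n k} : Set (Equiv.Perm (Fin n))) ≠ ⊤ := by
  have hH := closure_le_stabilizer_multiples (k := k) hdvd (by omega) (by omega)
  have hmem : (⟨l - 1, by omega⟩ : Fin n) ∈ multiples n l := by
    simp [multiples, show l - 1 + 1 = l by omega]
  have hnotMem : (⟨0, by omega⟩ : Fin n) ∉ multiples n l := by
    simpa [multiples] using (by omega : l ≠ 1)
  exact ⟨fun g hg x (hx : x ∈ multiples n l) => (mem_stabilizer_set.mp (hH hg) x).mpr hx,
    ne_top_of_le_ne_top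
      (Equiv.Perm.stabilizer_ne_top_of_nonempty_of_nonempty_compl ⟨_, hmem⟩ ⟨_, hnotMem⟩)
      hH⟩

theorem stmt7 (n k l : ℕ) (hn : 6 ≤ n) (hk : 2 ≤ k) (hlk : k + 1 ≤ l)
    (hknl : k < n - l) (hdvd : l ∣ n + 1) :
    (∀ g ∈ Subgroup.closure ({pr n n, pr n (n - l), pr n k} : Set (Equiv.Perm (Fin n))),
      ∀ x : Fin n, l ∣ (x.val + 1) → l ∣ ((g x).val + 1)) ∧
    Subgroup.closure ({pr n n, pr n (n - l), pr n k} : Set (Equiv.Perm (Fin n))) ≠ ⊤ :=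
  stmt7_general n k l hk hlk hknl hdvd
end

section
/- Let 1 < k < n - l ≤ n and l ≥ 2k+1, with n sufficiently large (e.g., n > 2l). Let Φ = {1,...,k} ∪ {n-k+1,...,n} and Δ = {t ∈ {1,...,n} : t ≡ s (mod l) for some s ∈ Φ}. Then Δ is a proper subset of {1,...,n} invariant under r_n, r_{n-l}, and r_k, and hence ⟨r_n, r_{n-l}, r_k⟩ is a proper subgroup of Sym_n. -/
open Equiv Set Pointwise

theorem Equiv.Perm.closure_ne_top_of_mapsTo {α : Type*} [Finite α] {S : Set (Perm α)}
    {Δ : Set α} (hS : ∀ g ∈ S, MapsTo g Δ Δ) {a b : α} (ha : a ∈ Δ) (hb : b ∉ Δ) :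
    Subgroup.closure S ≠ ⊤ := by
  classical
  intro htop
  have hle : Subgroup.closure S ≤ MulAction.stabilizer (Perm α) Δ := by
    refine (Subgroup.closure_le _).2 fun g hg => ?_
    rw [SetLike.mem_coe, MulAction.mem_stabilizer_iff, ← image_smul]
    exact ((Δ.toFinite.injOn_iff_bijOn_of_mapsTo (hS g hg)).1 g.injective.injOn).image_eq
  have hswap : swap a b • Δ = Δ := hle (htop ▸ Subgroup.mem_top (swap a b))
  have hab := smul_mem_smul_set (a := swap a b) ha
  rw [hswap, Perm.smul_def, swap_apply_left] at hab
  exact hb hab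

lemma pr_apply (n i : ℕ) (x : Fin n) :
    pr n i x = if h : x.val < i ∧ i ≤ n then ⟨i - 1 - x.val, by omega⟩ else x := rfl

lemma pr_val_of_lt {n i : ℕ} {x : Fin n} (hx : x.val < i) (hi : i ≤ n) :
    (pr n i x).val = i - 1 - x.val := by
  rw [pr_apply, dif_pos ⟨hx, hi⟩]

lemma pr_apply_of_not_lt {n i : ℕ} {x : Fin n} (h : ¬ (x.val < i ∧ i ≤ n)) : pr n i x = x := by
  rw [pr_apply, dif_neg h]

/-- The set `Δ` of the paper built from `Φ`; `x : Fin n` stands for the position `x + 1`. -/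
def residueSet (n l : ℕ) (Φ : Set ℕ) : Set (Fin n) :=
  {x | ∃ s ∈ Φ, x.val + 1 ≡ s [MOD l]}

lemma residueSet_ne_univ {n l : ℕ} (Φ : Finset ℕ) (hΦ : Φ.card < l) (hl : l ≤ n) :
    residueSet n l Φ ≠ univ := by
  intro huniv
  have hl0 : 0 < l := by omega
  have hrange : Finset.range l ⊆ Φ.image (· % l) := by
    intro r hr
    rw [Finset.mem_range] at hr
    have hx : (r + (l - 1)) % l < n := (Nat.mod_lt _ hl0).trans_le hl
    obtain ⟨s, hs, hxs⟩ : ⟨(r + (l - 1)) % l, hx⟩ ∈ residueSet n l Φ := huniv ▸ mem_univ _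
    have hr' : (r + (l - 1)) % l + 1 ≡ r [MOD l] :=
      calc (r + (l - 1)) % l + 1 ≡ r + (l - 1) + 1 [MOD l] := (Nat.mod_modEq _ _).add_right 1
        _ = r + l := by omega
        _ ≡ r [MOD l] := Nat.add_modEq_right
    refine Finset.mem_image.2 ⟨s, hs, ?_⟩
    rw [← Nat.mod_eq_of_lt hr]
    exact (hr'.symm.trans hxs).symm
  have := Finset.card_le_card hrange
  rw [Finset.card_range] at this
  exact absurd (this.trans Finset.card_image_le) (not_le.2 hΦ)

lemma mapsTo_pr_residueSet_of_modEq {n l i : ℕ} {Φ : Set ℕ}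
    (hΦ : ∀ s ∈ Φ, s ≤ n ∧ n + 1 - s ∈ Φ) (hi : i ≤ n) (hin : i ≡ n [MOD l]) :
    MapsTo (pr n i) (residueSet n l Φ) (residueSet n l Φ) := by
  rintro x ⟨s, hs, hxs⟩
  by_cases hx : x.val < i
  · refine ⟨n + 1 - s, (hΦ s hs).2, ?_⟩
    rw [pr_val_of_lt hx hi]
    refine Nat.ModEq.add_right_cancel hxs ?_
    calc i - 1 - x.val + 1 + (x.val + 1) = i + 1 := by omega
      _ ≡ n + 1 [MOD l] := hin.add_right 1
      _ = n + 1 - s + s := by have := (hΦ s hs).1; omega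
  · rw [pr_apply_of_not_lt (fun h => hx h.1)]
    exact ⟨s, hs, hxs⟩

lemma mapsTo_pr_residueSet_of_Icc_subset {n l i : ℕ} {Φ : Set ℕ} (hΦ : Icc 1 i ⊆ Φ) :
    MapsTo (pr n i) (residueSet n l Φ) (residueSet n l Φ) := by
  intro x hx
  by_cases h : x.val < i ∧ i ≤ n
  · refine ⟨i - x.val, hΦ ⟨by omega, by omega⟩, ?_⟩
    rw [pr_val_of_lt h.1 h.2, show i - 1 - x.val + 1 = i - x.val by omega]
  · rwa [pr_apply_of_not_lt h]

theorem stmt8_general (n k l : ℕ) (hk : 1 < k) (hl : 2 * k + 1 ≤ l)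
    (hn : 2 * l < n) :
    ({x : Fin n | ∃ s : ℕ, ((1 ≤ s ∧ s ≤ k) ∨ (n - k + 1 ≤ s ∧ s ≤ n)) ∧
        (x.val + 1) % l = s % l} : Set (Fin n)) ≠ Set.univ ∧
    (∀ x : Fin n, (∃ s : ℕ, ((1 ≤ s ∧ s ≤ k) ∨ (n - k + 1 ≤ s ∧ s ≤ n)) ∧
        (x.val + 1) % l = s % l) →
      ∀ g ∈ ({pr n n, pr n (n - l), pr n k} : Set (Equiv.Perm (Fin n))),
        ∃ s : ℕ, ((1 ≤ s ∧ s ≤ k) ∨ (n - k + 1 ≤ s ∧ s ≤ n)) ∧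
          ((g x).val + 1) % l = s % l) ∧
    Subgroup.closure ({pr n n, pr n (n - l), pr n k} : Set (Equiv.Perm (Fin n))) ≠ ⊤ := by
  let Δ := residueSet n l (Icc 1 k ∪ Icc (n - k + 1) n)
  have hreflect : ∀ s ∈ Icc 1 k ∪ Icc (n - k + 1) n,
      s ≤ n ∧ n + 1 - s ∈ Icc 1 k ∪ Icc (n - k + 1) n := by
    simp only [mem_union, mem_Icc]
    omega
  have hmaps : ∀ g ∈ ({pr n n, pr n (n - l), pr n k} : Set (Perm (Fin n))), MapsTo g Δ Δ := by
    simp only [mem_insert_iff, mem_singleton_iff]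
    rintro g (rfl | rfl | rfl)
    · exact mapsTo_pr_residueSet_of_modEq hreflect le_rfl rfl
    · refine mapsTo_pr_residueSet_of_modEq hreflect (Nat.sub_le n l) ?_
      calc n - l ≡ n - l + l [MOD l] := Nat.add_modEq_right.symm
        _ = n := by omega
    · exact mapsTo_pr_residueSet_of_Icc_subset subset_union_left
  have hne : Δ ≠ univ := by
    have hcard : (Finset.Icc 1 k ∪ Finset.Icc (n - k + 1) n).card < l := by
      refine (Finset.card_union_le _ _).trans_lt ?_
      simp only [Nat.card_Icc]
      omega
    simpa only [Finset.coe_union, Finset.coe_Icc] using residueSet_ne_univ _ hcard (by omega)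
  obtain ⟨b, hb⟩ := (ne_univ_iff_exists_notMem Δ).1 hne
  have ha : (⟨0, by omega⟩ : Fin n) ∈ Δ := ⟨1, Or.inl ⟨le_rfl, by omega⟩, rfl⟩
  exact ⟨hne, fun x hx g hg => hmaps g hg hx, Perm.closure_ne_top_of_mapsTo hmaps ha hb⟩

theorem stmt8 (n k l : ℕ) (hk : 1 < k) (hknl : k < n - l) (hl : 2 * k + 1 ≤ l)
    (hn : 2 * l < n) :
    ({x : Fin n | ∃ s : ℕ, ((1 ≤ s ∧ s ≤ k) ∨ (n - k + 1 ≤ s ∧ s ≤ n)) ∧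
        (x.val + 1) % l = s % l} : Set (Fin n)) ≠ Set.univ ∧
    (∀ x : Fin n, (∃ s : ℕ, ((1 ≤ s ∧ s ≤ k) ∨ (n - k + 1 ≤ s ∧ s ≤ n)) ∧
        (x.val + 1) % l = s % l) →
      ∀ g ∈ ({pr n n, pr n (n - l), pr n k} : Set (Equiv.Perm (Fin n))),
        ∃ s : ℕ, ((1 ≤ s ∧ s ≤ k) ∨ (n - k + 1 ≤ s ∧ s ≤ n)) ∧
          ((g x).val + 1) % l = s % l) ∧
    Subgroup.closure ({pr n n, pr n (n - l), pr n k} : Set (Equiv.Perm (Fin n))) ≠ ⊤ :=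
  stmt8_general n k l hk hl hn
end

section
/- For n ≥ 7 and 2 < m < n with n - m ≥ 5, the group ⟨r_n, r_m, r_2⟩ does not act transitively on {1,...,n}; in particular it is a proper subgroup of Sym_n. The orbit of 1 is contained in the set of integers congruent to one of 1, 2, m, m-1 modulo n-m. -/
open Equiv Set
open scoped Pointwise

lemma pr_val (n i : ℕ) (x : Fin n) :
    (pr n i x : ℕ) = if x.val < i ∧ i ≤ n then i - 1 - x.val else x.val := by
  show ((if h : x.val < i ∧ i ≤ n then (⟨i - 1 - x.val, by omega⟩ : Fin n) else x)).val = _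
  split_ifs <;> rfl

lemma pr_mapsTo_of_prefix_subset {n i : ℕ} {s : Set (Fin n)} (hs : {x | x.val < i} ⊆ s) :
    MapsTo (pr n i) s s := by
  intro x hx
  by_cases h : x.val < i ∧ i ≤ n
  · exact hs (by simp only [mem_ofPred_eq, pr_val, if_pos h]; omega)
  · rwa [show pr n i x = x from Fin.ext (by rw [pr_val, if_neg h])]

/-- Positions `x : Fin n` stand for the `1`-indexed positions `x + 1`. -/
def positionsModIn (n k : ℕ) (T : Set (ZMod k)) : Set (Fin n) :=
  {x | ((x.val + 1 : ℕ) : ZMod k) ∈ T}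

lemma mem_positionsModIn {n k : ℕ} {T : Set (ZMod k)} {x : Fin n} :
    x ∈ positionsModIn n k T ↔ ((x.val + 1 : ℕ) : ZMod k) ∈ T :=
  Iff.rfl

lemma pr_mapsTo_of_reflect_mem {n i k : ℕ} {T : Set (ZMod k)}
    (hT : ∀ a ∈ T, (i + 1 : ZMod k) - a ∈ T) :
    MapsTo (pr n i) (positionsModIn n k T) (positionsModIn n k T) := by
  intro x hx
  simp only [mem_positionsModIn, pr_val] at hx ⊢
  split_ifs with h
  · rw [show i - 1 - x.val + 1 = i - x.val by omega, Nat.cast_sub h.1.le]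
    convert hT _ hx using 1
    push_cast
    ring
  · exact hx

lemma exists_lt_natCast_add_one_notMem {k d : ℕ} (T : Finset (ZMod k)) (hd : d ≤ k)
    (hT : T.card < d) : ∃ x < d, ((x + 1 : ℕ) : ZMod k) ∉ T := by
  have hinj : InjOn (fun x : ℕ => ((x + 1 : ℕ) : ZMod k)) (Finset.range d) := by
    intro x hx y hy hxy
    simp only [Finset.coe_range, mem_Iio] at hx hy
    have := Nat.ModEq.add_right_cancel' 1 ((ZMod.natCast_eq_natCast_iff' _ _ _).1 hxy)
    rwa [Nat.ModEq, Nat.mod_eq_of_lt (by omega), Nat.mod_eq_of_lt (by omega)] at this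
  obtain ⟨_, hmem, hnot⟩ := Finset.exists_mem_notMem_of_card_lt_card
    (s := T) (t := (Finset.range d).image fun x : ℕ => ((x + 1 : ℕ) : ZMod k))
    (by rwa [Finset.card_image_of_injOn hinj, Finset.card_range])
  obtain ⟨x, hx, rfl⟩ := Finset.mem_image.1 hmem
  exact ⟨x, Finset.mem_range.1 hx, hnot⟩

lemma closure_le_stabilizer_of_mapsTo {α : Type*} [Finite α] {S : Set (Perm α)} {s : Set α}
    (h : ∀ σ ∈ S, MapsTo σ s s) : Subgroup.closure S ≤ MulAction.stabilizer (Perm α) s :=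
  (Subgroup.closure_le _).2 fun σ hσ => (MulAction.mem_stabilizer_set' s.toFinite).2 (h σ hσ)

def orbitResidues (k m : ℕ) : Finset (ZMod k) :=
  ({1, 2, m, m - 1} : Finset ℕ).image (↑)

lemma card_orbitResidues_le (k m : ℕ) : (orbitResidues k m).card ≤ 4 :=
  Finset.card_image_le.trans Finset.card_le_four

lemma sub_mem_orbitResidues {k m : ℕ} (hm : 0 < m) {a : ZMod k} (ha : a ∈ orbitResidues k m) :
    (m + 1 : ZMod k) - a ∈ orbitResidues k m := by
  obtain ⟨v, hv, rfl⟩ := Finset.mem_image.1 ha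
  simp only [Finset.mem_insert, Finset.mem_singleton] at hv
  rcases hv with rfl | rfl | rfl | rfl
  · exact Finset.mem_image.2 ⟨m, by simp, by push_cast; ring⟩
  · exact Finset.mem_image.2 ⟨m - 1, by simp, by rw [Nat.cast_pred hm]; push_cast; ring⟩
  · exact Finset.mem_image.2 ⟨1, by simp, by push_cast; ring⟩
  · exact Finset.mem_image.2 ⟨2, by simp, by rw [Nat.cast_pred hm]; push_cast; ring⟩

lemma closure_le_stabilizer_orbitResidues {n m : ℕ} (hm : 0 < m) (hmn : m ≤ n) :
    Subgroup.closure ({pr n n, pr n m, pr n 2} : Set (Perm (Fin n))) ≤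
      MulAction.stabilizer (Perm (Fin n))
        (positionsModIn n (n - m) ↑(orbitResidues (n - m) m)) := by
  have hnm : (n : ZMod (n - m)) = m := by
    rw [ZMod.natCast_eq_natCast_iff', ← Nat.add_sub_cancel' hmn, Nat.add_sub_cancel_left,
      Nat.add_mod_right]
  refine closure_le_stabilizer_of_mapsTo ?_
  simp only [mem_insert_iff, mem_singleton_iff, forall_eq_or_imp, forall_eq]
  refine ⟨pr_mapsTo_of_reflect_mem ?_, pr_mapsTo_of_reflect_mem ?_,
    pr_mapsTo_of_prefix_subset ?_⟩
  · rw [hnm]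
    exact fun _ => sub_mem_orbitResidues hm
  · exact fun _ => sub_mem_orbitResidues hm
  · intro x hx
    obtain h | h : x.val + 1 = 1 ∨ x.val + 1 = 2 := by simp only [mem_ofPred_eq] at hx; omega
    all_goals exact mem_positionsModIn.2 (Finset.mem_image_of_mem _ (by simp [h]))

theorem stmt9 (n m : ℕ) (hm1 : 2 < m) (hgap : 5 ≤ n - m) :
    (∀ g ∈ Subgroup.closure ({pr n n, pr n m, pr n 2} : Set (Equiv.Perm (Fin n))),
      ((g (⟨0, by omega⟩ : Fin n)).val + 1) % (n - m) = 1 % (n - m) ∨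
      ((g (⟨0, by omega⟩ : Fin n)).val + 1) % (n - m) = 2 % (n - m) ∨
      ((g (⟨0, by omega⟩ : Fin n)).val + 1) % (n - m) = m % (n - m) ∨
      ((g (⟨0, by omega⟩ : Fin n)).val + 1) % (n - m) = (m - 1) % (n - m)) ∧
    ¬ (∀ x y : Fin n, ∃ g ∈ Subgroup.closure
        ({pr n n, pr n m, pr n 2} : Set (Equiv.Perm (Fin n))), g x = y) ∧
    Subgroup.closure ({pr n n, pr n m, pr n 2} : Set (Equiv.Perm (Fin n))) ≠ ⊤ := by
  have orbit_mem : ∀ g ∈ Subgroup.closure ({pr n n, pr n m, pr n 2} : Set (Perm (Fin n))),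
      g ⟨0, by omega⟩ ∈ positionsModIn n (n - m) ↑(orbitResidues (n - m) m) := fun g hg =>
    (MulAction.mem_stabilizer_set' (Set.toFinite _)).1
      (closure_le_stabilizer_orbitResidues (by omega) (by omega) hg)
      (mem_positionsModIn.2 (Finset.mem_image_of_mem _ (by simp)))
  have not_transitive : ¬ ∀ x y : Fin n, ∃ g ∈ Subgroup.closure
      ({pr n n, pr n m, pr n 2} : Set (Perm (Fin n))), g x = y := by
    intro htrans
    obtain ⟨x, hx5, hx⟩ := exists_lt_natCast_add_one_notMem (orbitResidues (n - m) m) hgap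
      ((card_orbitResidues_le _ _).trans_lt (by norm_num))
    obtain ⟨g, hg, hgx⟩ := htrans ⟨0, by omega⟩ ⟨x, by omega⟩
    exact hx (mem_positionsModIn.1 (hgx ▸ orbit_mem g hg))
  refine ⟨fun g hg => ?_, not_transitive, fun htop => not_transitive fun x y =>
    ⟨swap x y, htop ▸ Subgroup.mem_top _, swap_apply_left x y⟩⟩
  obtain ⟨v, hv, hgv⟩ := Finset.mem_image.1 (mem_positionsModIn.1 (orbit_mem g hg))
  rw [ZMod.natCast_eq_natCast_iff'] at hgv
  simp only [Finset.mem_insert, Finset.mem_singleton] at hv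
  rcases hv with rfl | rfl | rfl | rfl <;> simp [← hgv]
end

section
/- Let n ≥ 4, 2 < m < n, m ∈ {n-1, n-2, n-3}. The set {r_n, r_m, r_2} generates Sym_n if and only if one of: (i) n even and m = n-1; (ii) n odd and m ∈ {n-1, n-2} when n ≡ 0 or 2 (mod 3); (iii) n odd and m ∈ {n-1, n-2, n-3} when n ≡ 1 (mod 3). Moreover for m ≤ n-4 (with n ≥ 7), {r_n, r_m, r_2} never generates Sym_n. -/
open Equiv Equiv.Perm Subgroup

def revPrefix (i x : ℕ) : ℕ := if x < i then i - 1 - x else x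

theorem revPrefix_involutive (i : ℕ) : Function.Involutive (revPrefix i) := by
  intro x
  unfold revPrefix
  split_ifs <;> omega

theorem val_pr {n i : ℕ} (hi : i ≤ n) (x : Fin n) : (pr n i x : ℕ) = revPrefix i x := by
  simp only [pr, Function.Involutive.coe_toPerm, revPrefix, hi, and_true]
  split_ifs <;> rfl

theorem pr_two {n : ℕ} (hn : 2 ≤ n) : pr n 2 = swap ⟨0, by omega⟩ ⟨1, by omega⟩ := by
  ext x
  rw [val_pr hn, swap_apply_def]
  unfold revPrefix
  split_ifs <;> simp_all [Fin.ext_iff]; omega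

def prefixRevGroup (n m : ℕ) : Subgroup (Perm (Fin n)) :=
  closure {pr n n, pr n m, pr n 2}

theorem pr_self_mem_prefixRevGroup (n m : ℕ) : pr n n ∈ prefixRevGroup n m :=
  subset_closure (by simp)

theorem pr_mem_prefixRevGroup (n m : ℕ) : pr n m ∈ prefixRevGroup n m :=
  subset_closure (by simp)

theorem pr_two_mem_prefixRevGroup (n m : ℕ) : pr n 2 ∈ prefixRevGroup n m :=
  subset_closure (by simp)

def SwapMem {n : ℕ} (G : Subgroup (Perm (Fin n))) (a b : ℕ) : Prop :=
  ∃ (ha : a < n) (hb : b < n), swap (⟨a, ha⟩ : Fin n) ⟨b, hb⟩ ∈ G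

namespace SwapMem

variable {n : ℕ} {G : Subgroup (Perm (Fin n))} {a b c : ℕ}

theorem symm (h : SwapMem G a b) : SwapMem G b a := by
  obtain ⟨ha, hb, hs⟩ := h
  exact ⟨hb, ha, swap_comm (α := Fin n) _ _ ▸ hs⟩

theorem trans (h₁ : SwapMem G a b) (h₂ : SwapMem G b c) : SwapMem G a c := by
  obtain ⟨ha, hb, hs₁⟩ := h₁
  obtain ⟨_, hc, hs₂⟩ := h₂
  exact ⟨ha, hc, SubmonoidClass.swap_mem_trans G hs₁ hs₂⟩

theorem prefixRev {i a' b' : ℕ} (hi : pr n i ∈ G) (hin : i ≤ n) (h : SwapMem G a b)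
    (ha' : revPrefix i a = a') (hb' : revPrefix i b = b') : SwapMem G a' b' := by
  obtain ⟨ha, hb, hs⟩ := h
  have hconj : swap (pr n i ⟨a, ha⟩) (pr n i ⟨b, hb⟩) ∈ G := by
    rw [swap_apply_apply]
    exact mul_mem (mul_mem hi hs) (inv_mem hi)
  have hA : (pr n i ⟨a, ha⟩ : ℕ) = a' := ha' ▸ val_pr hin _
  have hB : (pr n i ⟨b, hb⟩ : ℕ) = b' := hb' ▸ val_pr hin _
  refine ⟨hA ▸ Fin.isLt _, hB ▸ Fin.isLt _, ?_⟩
  convert hconj using 2 <;> ext <;> simp [hA, hB]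

end SwapMem

theorem eq_top_of_forall_swapMem_succ {n : ℕ} {G : Subgroup (Perm (Fin n))}
    (h : ∀ a, a + 1 < n → SwapMem G a (a + 1)) : G = ⊤ := by
  cases n with
  | zero => exact eq_top_iff.mpr fun g _ => Subsingleton.elim g 1 ▸ G.one_mem
  | succ N =>
    refine eq_top_iff.mpr fun g _ => ?_
    have hle : Submonoid.closure (Set.range fun i : Fin N ↦ swap i.castSucc i.succ) ≤
        G.toSubmonoid := by
      rw [Submonoid.closure_le]
      rintro _ ⟨i, rfl⟩
      obtain ⟨_, _, hs⟩ := h i (by omega)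
      exact hs
    exact hle (mclosure_swap_castSucc_succ N ▸ Submonoid.mem_top g)

section Generation

variable {n m : ℕ}

theorem swapMem_zero_one (hn : 2 ≤ n) : SwapMem (prefixRevGroup n m) 0 1 :=
  ⟨by omega, by omega, pr_two hn ▸ pr_two_mem_prefixRevGroup n m⟩

theorem SwapMem.reflect {a b a' b' : ℕ} (h : SwapMem (prefixRevGroup n m) a b)
    (ha : a + a' + 1 = n) (hb : b + b' + 1 = n) : SwapMem (prefixRevGroup n m) a' b' :=
  h.prefixRev (pr_self_mem_prefixRevGroup n m) le_rfl (by grind [revPrefix])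
    (by grind [revPrefix])

theorem SwapMem.shift {k a b : ℕ} (hk : m + k = n) (h : SwapMem (prefixRevGroup n m) a b)
    (ha : a < m) (hb : b < m) : SwapMem (prefixRevGroup n m) (a + k) (b + k) :=
  (h.prefixRev (pr_mem_prefixRevGroup n m) (by omega) rfl rfl).prefixRev
    (pr_self_mem_prefixRevGroup n m) le_rfl (by grind [revPrefix]) (by grind [revPrefix])

theorem SwapMem.shift_mul {k a b : ℕ} (hk : m + k = n)
    (h : SwapMem (prefixRevGroup n m) a b) : ∀ j, a + k * j < n → b + k * j < n →
      SwapMem (prefixRevGroup n m) (a + k * j) (b + k * j)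
  | 0, _, _ => h
  | j + 1, ha, hb => by
    rw [Nat.mul_succ] at ha hb ⊢
    simpa only [add_assoc] using
      (h.shift_mul hk j (by omega) (by omega)).shift hk (by omega) (by omega)

theorem prefixRevGroup_sub_one_eq_top (hn : 2 ≤ n) : prefixRevGroup n (n - 1) = ⊤ := by
  have h01 : SwapMem (prefixRevGroup n (n - 1)) 0 1 := swapMem_zero_one hn
  refine eq_top_of_forall_swapMem_succ fun a ha => ?_
  convert h01.shift_mul (k := 1) (by omega) a (by omega) (by omega) using 1 <;> omega

theorem prefixRevGroup_sub_two_eq_top (hn : 3 ≤ n) (hodd : n % 2 = 1) :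
    prefixRevGroup n (n - 2) = ⊤ := by
  have h01 : SwapMem (prefixRevGroup n (n - 2)) 0 1 := swapMem_zero_one (by omega)
  have heven (a : ℕ) (h : a % 2 = 0) (ha : a + 1 < n) :
      SwapMem (prefixRevGroup n (n - 2)) a (a + 1) := by
    convert h01.shift_mul (k := 2) (by omega) (a / 2) (by omega) (by omega) using 1 <;> omega
  refine eq_top_of_forall_swapMem_succ fun a ha => ?_
  rcases Nat.mod_two_eq_zero_or_one a with h | h
  · exact heven a h ha
  · exact ((heven (n - 2 - a) (by omega) (by omega)).reflect (by omega) (by omega)).symm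

theorem prefixRevGroup_sub_three_eq_top (hn : 7 ≤ n) (hmod : n % 6 = 1) :
    prefixRevGroup n (n - 3) = ⊤ := by
  set G := prefixRevGroup n (n - 3)
  have hk : n - 3 + 3 = n := by omega
  have hL := pr_self_mem_prefixRevGroup n (n - 3)
  have hR := pr_mem_prefixRevGroup n (n - 3)
  have h01 : SwapMem G 0 1 := swapMem_zero_one (by omega)
  have h0 (a : ℕ) (h : a % 3 = 0) (ha : a + 1 < n) : SwapMem G a (a + 1) := by
    convert h01.shift_mul hk (a / 3) (by omega) (by omega) using 1 <;> omega
  have h2 (a : ℕ) (h : a % 3 = 2) (ha : a + 1 < n) : SwapMem G a (a + 1) :=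
    ((h0 (n - 2 - a) (by omega) (by omega)).reflect (by omega) (by omega)).symm
  have e1 : SwapMem G (n - 1) 2 :=
    ((h0 (n - 4) (by omega) (by omega)).prefixRev hR (by omega) rfl rfl).prefixRev hL le_rfl
      (by grind [revPrefix]) (by grind [revPrefix])
  have e2 : SwapMem G 0 5 :=
    (e1.prefixRev hR (by omega) rfl rfl).prefixRev hL le_rfl
      (by grind [revPrefix]) (by grind [revPrefix])
  have hlong (a : ℕ) (h : a % 3 = 0) (ha : a + 5 < n) : SwapMem G a (a + 5) := by
    convert e2.shift_mul hk (a / 3) (by omega) (by omega) using 1 <;> omega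
  have hchain (s : ℕ) (hs : 6 * s + 6 < n) : SwapMem G 0 (6 * s + 6) := by
    induction s with
    | zero => exact e2.trans (h2 5 rfl (by omega))
    | succ s ih =>
      exact ((ih (by omega)).trans (hlong (6 * s + 6) (by omega) (by omega))).trans
        (h2 (6 * s + 11) (by omega) (by omega))
  have h12 : SwapMem G 1 2 := by
    refine h01.symm.trans (SwapMem.trans ?_ e1)
    convert hchain (n / 6 - 1) (by omega) using 1
    omega
  have h1 (a : ℕ) (h : a % 3 = 1) (ha : a + 1 < n) : SwapMem G a (a + 1) := by
    convert h12.shift_mul hk (a / 3) (by omega) (by omega) using 1 <;> omega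
  refine eq_top_of_forall_swapMem_succ fun a ha => ?_
  have : a % 3 = 0 ∨ a % 3 = 1 ∨ a % 3 = 2 := by omega
  rcases this with h | h | h
  exacts [h0 a h ha, h1 a h ha, h2 a h ha]

end Generation

def fiberPreserving {α β : Type*} (f : α → β) : Subgroup (Perm α) where
  carrier := {g | ∀ x y, f (g x) = f (g y) ↔ f x = f y}
  one_mem' _ _ := Iff.rfl
  mul_mem' hg hh x y := (hg _ _).trans (hh x y)
  inv_mem' {g} hg x y := by simpa using (hg (g⁻¹ x) (g⁻¹ y)).symm

theorem fiberPreserving_ne_top {α β : Type*} {f : α → β} {x y z : α} (hxy : x ≠ y)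
    (hf : f x = f y) (hfz : f x ≠ f z) : fiberPreserving f ≠ ⊤ := by
  classical
  intro htop
  have hswap : swap y z ∈ fiberPreserving f := htop ▸ mem_top (swap y z)
  have hxz : x ≠ z := by rintro rfl; exact hfz rfl
  have := (hswap x y).mpr hf
  rw [swap_apply_of_ne_of_ne hxy hxz, swap_apply_left] at this
  exact hfz this

theorem revPrefix_div_of_le {d i : ℕ} (hid : i ≤ d) (x : ℕ) : revPrefix i x / d = x / d := by
  unfold revPrefix
  split_ifs with hx
  · rw [Nat.div_eq_of_lt (by omega), Nat.div_eq_of_lt (by omega)]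
  · rfl

theorem revPrefix_div_of_dvd {d i : ℕ} (hd : d ∣ i) (x : ℕ) :
    revPrefix i x / d = revPrefix (i / d) (x / d) := by
  rcases Nat.eq_zero_or_pos d with rfl | hd0
  · simp [revPrefix, zero_dvd_iff.mp hd]
  obtain ⟨q, rfl⟩ := hd
  rw [Nat.mul_div_cancel_left q hd0]
  unfold revPrefix
  by_cases hx : x < d * q
  · have hs : x / d < q := (Nat.div_lt_iff_lt_mul hd0).mpr (by rwa [mul_comm])
    obtain ⟨u, hu⟩ : ∃ u, q = x / d + 1 + u := ⟨q - x / d - 1, by omega⟩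
    have hdx := Nat.div_add_mod x d
    have ht := Nat.mod_lt x hd0
    have hsplit : d * q - 1 - x = (d - 1 - x % d) + d * u := by
      rw [hu, mul_add, mul_add, mul_one]
      omega
    rw [if_pos hx, if_pos hs, hsplit, Nat.add_mul_div_left _ _ hd0, Nat.div_eq_of_lt (by omega)]
    omega
  · have hs : ¬ x / d < q := by
      rw [not_lt, Nat.le_div_iff_mul_le hd0, mul_comm]
      omega
    rw [if_neg hx, if_neg hs]

section Obstructions

variable {n m : ℕ}

theorem prefixRevGroup_ne_top_of_fibers {β : Type*} {F : ℕ → β} (hmn : m ≤ n) (hn : 2 ≤ n)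
    (hF : ∀ i ∈ ({n, m, 2} : Set ℕ), ∀ x < n, ∀ y < n,
      F (revPrefix i x) = F (revPrefix i y) ↔ F x = F y)
    {x y z : ℕ} (hx : x < n) (hy : y < n) (hz : z < n) (hxy : x ≠ y) (hf : F x = F y)
    (hfz : F x ≠ F z) : prefixRevGroup n m ≠ ⊤ := by
  have hmem {i : ℕ} (hi : i ∈ ({n, m, 2} : Set ℕ)) (hin : i ≤ n) :
      pr n i ∈ fiberPreserving fun u : Fin n => F u := fun u v => by
    simpa only [val_pr hin] using hF i hi u u.isLt v v.isLt
  have hle : prefixRevGroup n m ≤ fiberPreserving fun u : Fin n => F u := by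
    rw [prefixRevGroup, closure_le]
    rintro g (rfl | rfl | rfl)
    exacts [hmem (by simp) le_rfl, hmem (by simp) hmn, hmem (by simp) hn]
  refine ne_top_of_le_ne_top (fiberPreserving_ne_top (x := ⟨x, hx⟩) (y := ⟨y, hy⟩)
    (z := ⟨z, hz⟩) ?_ hf hfz) hle
  simpa [Fin.ext_iff] using hxy

theorem prefixRevGroup_ne_top_of_dvd {d : ℕ} (hd : 2 ≤ d) (hdn : d ∣ n) (hdm : d ∣ m)
    (hdlt : d < n) (hmn : m ≤ n) : prefixRevGroup n m ≠ ⊤ := by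
  have hdiv {i : ℕ} (hi : d ∣ i) (x y : ℕ) :
      revPrefix i x / d = revPrefix i y / d ↔ x / d = y / d := by
    rw [revPrefix_div_of_dvd hi, revPrefix_div_of_dvd hi]
    exact (revPrefix_involutive _).injective.eq_iff
  refine prefixRevGroup_ne_top_of_fibers (F := (· / d)) hmn (by omega) ?_ (x := 0) (y := 1)
    (z := d) (by omega) (by omega) hdlt zero_ne_one ?_ ?_
  · rintro i (rfl | rfl | rfl) x - y -
    exacts [hdiv hdn x y, hdiv hdm x y, by rw [revPrefix_div_of_le hd, revPrefix_div_of_le hd]]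
  · simp [Nat.div_eq_of_lt (by omega : 1 < d)]
  · simp [Nat.div_self (by omega : 0 < d)]

theorem prefixRevGroup_sub_three_ne_top_of_mod_six_eq_four (hn : n % 6 = 4) :
    prefixRevGroup n (n - 3) ≠ ⊤ :=
  prefixRevGroup_ne_top_of_fibers (F := fun x => (x + 1) % 6 / 3) (by omega) (by omega)
    (by rintro i (rfl | rfl | rfl) x hx y hy <;> simp only [revPrefix] <;> split_ifs <;> omega)
    (x := 0) (y := 1) (z := 2) (by omega) (by omega) (by omega) (by omega) rfl (by decide)

theorem prefixRevGroup_ne_top_of_zmod {k : ℕ} [NeZero k] (hk : m + k = n) (hn : 2 ≤ n)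
    {a b : ZMod k} (hab : a + b = m + 1) (ha : a ≠ 1 ∧ a ≠ 2) (hb : b ≠ 1 ∧ b ≠ 2) :
    prefixRevGroup n m ≠ ⊤ := by
  set F : ℕ → Prop := fun x => ((x + 1 : ℕ) : ZMod k) ∈ ({a, b} : Set (ZMod k))
  have hrefl (t : ZMod k) :
      a + b - t ∈ ({a, b} : Set (ZMod k)) ↔ t ∈ ({a, b} : Set (ZMod k)) := by
    simp only [Set.mem_insert_iff, Set.mem_singleton_iff]
    grind
  have hinv {i : ℕ} (hi : (i : ZMod k) = m) (x : ℕ) : F (revPrefix i x) = F x := by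
    unfold revPrefix
    split_ifs with hx
    · have hcast : ((i - 1 - x + 1 : ℕ) : ZMod k) = a + b - ((x + 1 : ℕ) : ZMod k) := by
        rw [hab, show i - 1 - x + 1 = i - x by omega, Nat.cast_sub hx.le, hi]
        push_cast
        ring
      show (((i - 1 - x + 1 : ℕ) : ZMod k) ∈ ({a, b} : Set (ZMod k))) = F x
      rw [hcast]
      exact propext (hrefl _)
    · rfl
  have hF0 : ¬ F 0 := by simp [F, ha.1.symm, hb.1.symm]
  have hF1 : ¬ F 1 := by simp [F, one_add_one_eq_two, ha.2.symm, hb.2.symm]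
  have hinv2 (x : ℕ) : F (revPrefix 2 x) = F x := by
    unfold revPrefix
    split_ifs with hx
    · interval_cases x <;> simp [propext (iff_of_false hF0 hF1)]
    · rfl
  have hnm : (n : ZMod k) = m := by rw [← hk, Nat.cast_add, ZMod.natCast_self, add_zero]
  have hFz : F (a - 1).val := by simp [F]
  refine prefixRevGroup_ne_top_of_fibers (F := F) (by omega) hn ?_ (x := 0) (y := 1)
    (z := (a - 1).val) (by omega) (by omega) ((ZMod.val_lt _).trans_le (by omega)) zero_ne_one
    (propext (iff_of_false hF0 hF1)) (fun h => hF0 (h ▸ hFz))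
  rintro i (rfl | rfl | rfl) x - y -
  · rw [hinv hnm, hinv hnm]
  · rw [hinv rfl, hinv rfl]
  · rw [hinv2, hinv2]

theorem exists_add_eq_avoiding_one_two {k : ℕ} (hk : 5 ≤ k) (c : ZMod k) :
    ∃ a b : ZMod k, a + b = c ∧ (a ≠ 1 ∧ a ≠ 2) ∧ (b ≠ 1 ∧ b ≠ 2) := by
  have : NeZero k := ⟨by omega⟩
  have hcard :
      ({1, 2, c - 1, c - 2} : Finset (ZMod k)).card < (Finset.univ : Finset (ZMod k)).card :=
    calc _ ≤ 4 := Finset.card_le_four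
      _ < k := by omega
      _ = _ := (ZMod.card k).symm
  obtain ⟨a, -, ha⟩ := Finset.exists_mem_notMem_of_card_lt_card hcard
  simp only [Finset.mem_insert, Finset.mem_singleton, not_or] at ha
  refine ⟨a, c - a, add_sub_cancel a c, ⟨ha.1, ha.2.1⟩, ?_, ?_⟩ <;> grind

theorem prefixRevGroup_sub_three_ne_top_of_mod_three_eq_two (hn : 5 ≤ n)
    (hmod : n % 3 = 2) : prefixRevGroup n (n - 3) ≠ ⊤ := by
  have hm : ((n - 3 : ℕ) : ZMod 3) = 2 := by
    rw [← ZMod.natCast_mod, show (n - 3) % 3 = 2 by omega]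
    rfl
  exact prefixRevGroup_ne_top_of_zmod (k := 3) (a := 0) (b := 0) (by omega) (by omega)
    (by rw [hm]; decide) (by decide) (by decide)

theorem prefixRevGroup_ne_top_of_add_four_le (hm : 2 < m) (hmn : m + 4 ≤ n) :
    prefixRevGroup n m ≠ ⊤ := by
  obtain ⟨k, hk⟩ : ∃ k, m + k = n := ⟨n - m, by omega⟩
  rcases (show k = 4 ∨ 5 ≤ k by omega) with rfl | hk5
  · rcases Nat.mod_two_eq_zero_or_one m with hm2 | hm2
    · exact prefixRevGroup_ne_top_of_dvd le_rfl (by omega) (by omega) (by omega) (by omega)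
    · have hcast := ZMod.natCast_mod m 4
      rcases (show m % 4 = 1 ∨ m % 4 = 3 by omega) with h | h <;> rw [h] at hcast
      · exact prefixRevGroup_ne_top_of_zmod hk (by omega) (a := 3) (b := 3)
          (by rw [← hcast]; decide) (by decide) (by decide)
      · exact prefixRevGroup_ne_top_of_zmod hk (by omega) (a := 0) (b := 0)
          (by rw [← hcast]; decide) (by decide) (by decide)
  · have : NeZero k := ⟨by omega⟩
    obtain ⟨a, b, hab, ha, hb⟩ := exists_add_eq_avoiding_one_two hk5 (m + 1)
    exact prefixRevGroup_ne_top_of_zmod hk (by omega) hab ha hb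

end Obstructions

theorem stmt14_general (n m : ℕ) (hm1 : 2 < m) (hm2 : m < n) :
    (n - 3 ≤ m →
      (Subgroup.closure ({pr n n, pr n m, pr n 2} : Set (Equiv.Perm (Fin n))) = ⊤ ↔
        (n % 2 = 0 ∧ m = n - 1) ∨
        (n % 2 = 1 ∧ (n % 3 = 0 ∨ n % 3 = 2) ∧ (m = n - 1 ∨ m = n - 2)) ∨
        (n % 2 = 1 ∧ n % 3 = 1 ∧ (m = n - 1 ∨ m = n - 2 ∨ m = n - 3)))) ∧
    (7 ≤ n → m ≤ n - 4 →
      Subgroup.closure ({pr n n, pr n m, pr n 2} : Set (Equiv.Perm (Fin n))) ≠ ⊤) := by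
  refine ⟨fun hm3 => ⟨fun htop => ?_, fun hcond => ?_⟩,
    fun _ hm4 => prefixRevGroup_ne_top_of_add_four_le hm1 (by omega)⟩
  · by_contra hcond
    rcases (show (m = n - 2 ∧ n % 2 = 0) ∨ (m = n - 3 ∧ n % 3 = 0) ∨ (m = n - 3 ∧ n % 3 = 2) ∨
        (m = n - 3 ∧ n % 6 = 4) by omega) with ⟨rfl, h⟩ | ⟨rfl, h⟩ | ⟨rfl, h⟩ | ⟨rfl, h⟩
    · exact prefixRevGroup_ne_top_of_dvd (d := 2) le_rfl (by omega) (by omega) (by omega)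
        (by omega) htop
    · exact prefixRevGroup_ne_top_of_dvd (d := 3) (by norm_num) (by omega) (by omega) (by omega)
        (by omega) htop
    · exact prefixRevGroup_sub_three_ne_top_of_mod_three_eq_two (by omega) h htop
    · exact prefixRevGroup_sub_three_ne_top_of_mod_six_eq_four h htop
  · rcases (show m = n - 1 ∨ (m = n - 2 ∧ n % 2 = 1) ∨ (m = n - 3 ∧ n % 6 = 1) by omega) with
      rfl | ⟨rfl, h⟩ | ⟨rfl, h⟩
    · exact prefixRevGroup_sub_one_eq_top (by omega)
    · exact prefixRevGroup_sub_two_eq_top (by omega) h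
    · exact prefixRevGroup_sub_three_eq_top (by omega) h

theorem stmt14 (n m : ℕ) (hn : 4 ≤ n) (hm1 : 2 < m) (hm2 : m < n) :
    (n - 3 ≤ m →
      (Subgroup.closure ({pr n n, pr n m, pr n 2} : Set (Equiv.Perm (Fin n))) = ⊤ ↔
        (n % 2 = 0 ∧ m = n - 1) ∨
        (n % 2 = 1 ∧ (n % 3 = 0 ∨ n % 3 = 2) ∧ (m = n - 1 ∨ m = n - 2)) ∨
        (n % 2 = 1 ∧ n % 3 = 1 ∧ (m = n - 1 ∨ m = n - 2 ∨ m = n - 3)))) ∧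
    (7 ≤ n → m ≤ n - 4 →
      Subgroup.closure ({pr n n, pr n m, pr n 2} : Set (Equiv.Perm (Fin n))) ≠ ⊤) :=
  stmt14_general n m hm1 hm2
end

section
/- If n is odd and n ≥ 9, then ⟨r_n, r_{n-4}, r_3⟩ is a proper subgroup of Sym_n: the orbit of 1 under the natural action contains only elements congruent to 1 or 3 modulo 4, in particular contains no even integer. -/
def parityPreserving (n : ℕ) : Subgroup (Equiv.Perm (Fin n)) where
  carrier := {g | ∀ x, (g x).val % 2 = x.val % 2}
  one_mem' _ := rfl
  mul_mem' {a b} ha hb x := by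
    rw [Equiv.Perm.mul_apply, ha, hb]
  inv_mem' {a} ha x := by
    simpa using (ha (a⁻¹ x)).symm

theorem pr_mem_parityPreserving (n : ℕ) {i : ℕ} (hi : Odd i) : pr n i ∈ parityPreserving n := by
  intro x
  obtain ⟨k, rfl⟩ := hi
  simp only [pr, Function.Involutive.toPerm, Equiv.coe_fn_mk]
  split_ifs
  · rw [Fin.val_mk]
    omega
  · rfl

theorem swap_not_mem_parityPreserving {n : ℕ} (x y : Fin n) (hxy : x.val % 2 ≠ y.val % 2) :
    Equiv.swap x y ∉ parityPreserving n := fun h =>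
  hxy ((Equiv.swap_apply_left x y ▸ h x).symm)

theorem parityPreserving_ne_top {n : ℕ} (hn : 2 ≤ n) : parityPreserving n ≠ ⊤ := fun h =>
  swap_not_mem_parityPreserving (⟨0, by omega⟩ : Fin n) ⟨1, by omega⟩ (by simp)
    (h ▸ Subgroup.mem_top _)

theorem stmt16 (n : ℕ) (hodd : Odd n) (hn : 9 ≤ n) :
    (∀ g ∈ Subgroup.closure ({pr n n, pr n (n - 4), pr n 3} : Set (Equiv.Perm (Fin n))),
      ((g (⟨0, by omega⟩ : Fin n)).val + 1) % 4 = 1 ∨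
      ((g (⟨0, by omega⟩ : Fin n)).val + 1) % 4 = 3) ∧
    (∀ g ∈ Subgroup.closure ({pr n n, pr n (n - 4), pr n 3} : Set (Equiv.Perm (Fin n))),
      ¬ Even ((g (⟨0, by omega⟩ : Fin n)).val + 1)) ∧
    Subgroup.closure ({pr n n, pr n (n - 4), pr n 3} : Set (Equiv.Perm (Fin n))) ≠ ⊤ := by
  have hle : Subgroup.closure ({pr n n, pr n (n - 4), pr n 3} : Set (Equiv.Perm (Fin n))) ≤
      parityPreserving n := by
    have hodd' : Odd (n - 4) := Nat.Odd.sub_even (by omega) hodd (by decide)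
    rw [Subgroup.closure_le]
    rintro g (rfl | rfl | rfl)
    exacts [pr_mem_parityPreserving n hodd, pr_mem_parityPreserving n hodd',
      pr_mem_parityPreserving n (by decide)]
  have horbit : ∀ g ∈ Subgroup.closure ({pr n n, pr n (n - 4), pr n 3} : Set (Equiv.Perm (Fin n))),
      (g (⟨0, by omega⟩ : Fin n)).val % 2 = 0 := fun g hg => hle hg _
  refine ⟨fun g hg => ?_, fun g hg => ?_,
    fun htop => parityPreserving_ne_top (n := n) (by omega) ?_⟩
  · have := horbit g hg
    omega
  · rw [Nat.even_add_one, Nat.even_iff, horbit g hg]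
    decide
  · exact top_le_iff.mp (htop ▸ hle)
end
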